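/- For a test function h : ℝ → ℝ that is continuously differentiable with ‖h'‖_∞ ≤ 1, the bounded solution f_h of the Stein equation f'(w) - w·f(w) = h(w) - E[h(Z)] is twice differentiable and satisfies ‖f_h''‖_∞ ≤ 2‖h'‖_∞. -/

import Mathlib

open MeasureTheory ProbabilityTheory Real Set Filter Topology

/-!
Write `φ(t) = e^{-t²/2}`, `P(w) = ∫_{-∞}^w φ` (so that `∫_w^∞ φ = P(-w)`),
`A(w) = ∫_{-∞}^w h' P` and `B(w) = ∫_w^∞ h'(s) P(-s) ds`. Integrating by parts,
`√(2π) (h(w) - E h(Z)) = A(w) - B(w)`, and then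
`√(2π) e^{-w²/2} f_h(w) = -(P(-w) A(w) + P(w) B(w))`.
Differentiating the Stein equation gives `f_h'' = (1 + w²) f_h + w (h - E h(Z)) + h'`, and
`√(2π) ((1 + w²) f_h + w (h - E h(Z))) = -(A c₁ + B c₂)` with
`c₁ = (1 + w²) e^{w²/2} P(-w) - w` and `c₂ = (1 + w²) e^{w²/2} P(w) + w`, both nonnegative by
the Mills ratio bound `P(w) ≥ -w φ(w) / (1 + w²)`. Now `|A(w)| ≤ ‖h'‖ (w P(w) + φ(w))`
and `|B(w)| ≤ ‖h'‖ (φ(w) - w P(-w))`, and these weights satisfy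
`(w P(w) + φ(w)) c₁ + (φ(w) - w P(-w)) c₂ = √(2π)`, so the first two terms of `f_h''` are
bounded by `‖h'‖`; the term `h'` contributes the second `‖h'‖`.
-/

lemma hasDerivAt_integral_Iic {E : Type*} [NormedAddCommGroup E] [NormedSpace ℝ E]
    [CompleteSpace E] {g : ℝ → E} (hg : Continuous g) (hint : ∀ a, IntegrableOn g (Iic a))
    (w : ℝ) : HasDerivAt (fun u => ∫ s in Iic u, g s) (g w) w := by
  have hsplit : (fun u => ∫ s in Iic u, g s) =
      fun u => (∫ s in Iic 0, g s) + ∫ s in 0..u, g s := by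
    funext u
    rw [← intervalIntegral.integral_Iic_sub_Iic (hint 0) (hint u), add_sub_cancel]
  rw [hsplit]
  exact (intervalIntegral.integral_hasDerivAt_right (hg.intervalIntegrable 0 w)
    (hg.stronglyMeasurableAtFilter _ _) hg.continuousAt).const_add _

noncomputable section

namespace Stein

def gaussExp (t : ℝ) : ℝ := exp (-t ^ 2 / 2)

lemma gaussExp_eq : gaussExp = fun t => exp (-(1 / 2) * t ^ 2) := by
  funext t; rw [gaussExp]; ring_nf

lemma gaussExp_pos (t : ℝ) : 0 < gaussExp t := exp_pos _

lemma gaussExp_neg (t : ℝ) : gaussExp (-t) = gaussExp t := by simp [gaussExp]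

lemma exp_mul_gaussExp (w : ℝ) : exp (w ^ 2 / 2) * gaussExp w = 1 := by
  rw [gaussExp, ← exp_add]; ring_nf; exact exp_zero

lemma continuous_gaussExp : Continuous gaussExp := by unfold gaussExp; fun_prop

lemma hasDerivAt_gaussExp (w : ℝ) : HasDerivAt gaussExp (-w * gaussExp w) w := by
  have := ((hasDerivAt_pow 2 w).neg.div_const 2).exp
  refine this.congr_deriv ?_
  unfold gaussExp; simp only [Pi.neg_apply]; push_cast; ring

lemma integrable_gaussExp : Integrable gaussExp := by
  rw [gaussExp_eq]; exact integrable_exp_neg_mul_sq (by norm_num)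

lemma integrable_mul_gaussExp : Integrable fun t => t * gaussExp t := by
  simpa [gaussExp_eq] using
    integrable_rpow_mul_exp_neg_mul_sq (b := 1 / 2) (by norm_num) (s := 1) (by norm_num)

lemma integral_gaussExp : ∫ t, gaussExp t = √(2 * π) := by
  rw [gaussExp_eq, integral_gaussian]; norm_num [mul_comm]

lemma tendsto_gaussExp_atBot : Tendsto gaussExp atBot (𝓝 0) := by
  rw [gaussExp_eq]
  exact tendsto_exp_atBot.comp <|
    (tendsto_pow_atTop two_ne_zero |>.comp tendsto_neg_atBot_atTop |>.congr fun t => by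
      simp) |>.const_mul_atTop_of_neg (by norm_num)

lemma integral_mul_gaussExp (h : ℝ → ℝ) :
    ∫ z, h z * gaussExp z = √(2 * π) * ∫ z, h z ∂gaussianReal 0 1 := by
  rw [integral_gaussianReal_eq_integral_smul one_ne_zero, ← integral_const_mul]
  congr with z
  have : √(2 * π) ≠ 0 := by positivity
  simp only [gaussExp, gaussianPDFReal, NNReal.coe_one, mul_one, sub_zero, smul_eq_mul]
  field_simp

def gaussIic (w : ℝ) : ℝ := ∫ s in Iic w, gaussExp s

lemma hasDerivAt_gaussIic (w : ℝ) : HasDerivAt gaussIic (gaussExp w) w :=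
  hasDerivAt_integral_Iic continuous_gaussExp (fun _ => integrable_gaussExp.integrableOn) w

lemma continuous_gaussIic : Continuous gaussIic :=
  continuous_iff_continuousAt.2 fun w => (hasDerivAt_gaussIic w).continuousAt

lemma gaussIic_nonneg (w : ℝ) : 0 ≤ gaussIic w :=
  setIntegral_nonneg measurableSet_Iic fun t _ => (gaussExp_pos t).le

lemma gaussIic_add_gaussIic_neg (w : ℝ) : gaussIic w + gaussIic (-w) = √(2 * π) := by
  have hIoi : gaussIic (-w) = ∫ s in Ioi w, gaussExp s := by
    rw [gaussIic, ← integral_comp_neg_Ioi]; simp_rw [gaussExp_neg]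
  rw [hIoi, gaussIic, intervalIntegral.integral_Iic_add_Ioi integrable_gaussExp.integrableOn
    integrable_gaussExp.integrableOn, integral_gaussExp]

lemma tendsto_gaussIic_atBot : Tendsto gaussIic atBot (𝓝 0) :=
  tendsto_integral_Iic_zero tendsto_id

lemma tendsto_gaussIic_neg_atBot : Tendsto (fun w => gaussIic (-w)) atBot (𝓝 √(2 * π)) := by
  have := tendsto_gaussIic_atBot.const_sub √(2 * π)
  rw [sub_zero] at this
  exact this.congr fun w => by linarith [gaussIic_add_gaussIic_neg w]

lemma neg_mul_gaussIic_le (w : ℝ) : -w * gaussIic w ≤ gaussExp w := by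
  have hint : Integrable fun z => -z * gaussExp z := by
    simpa only [neg_mul] using integrable_mul_gaussExp.fun_neg
  have hprim : ∫ z in Iic w, -z * gaussExp z = gaussExp w := by
    simpa using integral_Iic_of_hasDerivAt_of_tendsto' (fun z _ => hasDerivAt_gaussExp z)
      hint.integrableOn tendsto_gaussExp_atBot
  rw [gaussIic, ← integral_const_mul, ← hprim]
  refine setIntegral_mono_on (integrable_gaussExp.integrableOn.const_mul _)
    hint.integrableOn measurableSet_Iic fun z (hz : z ≤ w) => ?_
  nlinarith [gaussExp_pos z]

lemma gaussIic_le_gaussExp {w : ℝ} (hw : w ≤ -1) : gaussIic w ≤ gaussExp w := by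
  nlinarith [neg_mul_gaussIic_le w, gaussIic_nonneg w]

lemma tendsto_mul_gaussIic_atBot : Tendsto (fun w => w * gaussIic w) atBot (𝓝 0) := by
  refine squeeze_zero_norm' ?_ tendsto_gaussExp_atBot
  filter_upwards [Iic_mem_atBot 0] with w (hw : w ≤ 0)
  rw [norm_mul, Real.norm_of_nonpos hw, Real.norm_of_nonneg (gaussIic_nonneg w)]
  exact neg_mul_gaussIic_le w

lemma integrableOn_gaussIic_Iic (a : ℝ) : IntegrableOn gaussIic (Iic a) := by
  have htail : IntegrableOn gaussIic (Iic (min a (-1))) := by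
    refine integrable_gaussExp.integrableOn.mono' continuous_gaussIic.aestronglyMeasurable.restrict
      ((ae_restrict_iff' measurableSet_Iic).2 (ae_of_all _ fun w hw => ?_))
    rw [Real.norm_of_nonneg (gaussIic_nonneg w)]
    exact gaussIic_le_gaussExp (hw.trans (min_le_right _ _))
  rw [← Iic_union_Icc_eq_Iic (min_le_left a (-1))]
  exact htail.union continuous_gaussIic.integrableOn_Icc

lemma integral_gaussIic_Iic (w : ℝ) :
    ∫ s in Iic w, gaussIic s = w * gaussIic w + gaussExp w := by
  have hderiv (s : ℝ) : HasDerivAt (fun s => s * gaussIic s + gaussExp s) (gaussIic s) s := by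
    refine (((hasDerivAt_id s).mul (hasDerivAt_gaussIic s)).add
      (hasDerivAt_gaussExp s)).congr_deriv ?_
    simp only [id_eq]; ring
  have hlim := tendsto_mul_gaussIic_atBot.add tendsto_gaussExp_atBot
  rw [add_zero] at hlim
  rw [integral_Iic_of_hasDerivAt_of_tendsto' (fun s _ => hderiv s) (integrableOn_gaussIic_Iic w)
    hlim, sub_zero]

/-- The lower half of the Mills ratio bound: `P(w) + w φ(w) / (1 + w²)` is monotone, with
derivative `2 φ(w) / (1 + w²)²`, and vanishes at `-∞`. -/
lemma neg_mul_gaussExp_div_le_gaussIic (w : ℝ) :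
    -w * gaussExp w / (1 + w ^ 2) ≤ gaussIic w := by
  set D : ℝ → ℝ := fun w => gaussIic w + w * gaussExp w / (1 + w ^ 2)
  have hD (s : ℝ) : HasDerivAt D (2 * gaussExp s / (1 + s ^ 2) ^ 2) s := by
    have hden : HasDerivAt (fun s : ℝ => 1 + s ^ 2) (2 * s) s := by
      simpa using (hasDerivAt_pow 2 s).const_add 1
    have hpos : 1 + s ^ 2 ≠ 0 := by positivity
    refine ((hasDerivAt_gaussIic s).add
      (((hasDerivAt_id s).mul (hasDerivAt_gaussExp s)).div hden hpos)).congr_deriv ?_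
    simp only [Pi.mul_apply, id_eq]; field_simp; ring
  have hmono : Monotone D :=
    monotone_of_hasDerivAt_nonneg hD fun s => by have := gaussExp_pos s; positivity
  have hlim : Tendsto D atBot (𝓝 0) := by
    have hfrac : Tendsto (fun w => w * gaussExp w / (1 + w ^ 2)) atBot (𝓝 0) := by
      refine squeeze_zero_norm (fun w => ?_) tendsto_gaussExp_atBot
      rw [norm_div, norm_mul, Real.norm_eq_abs w, Real.norm_of_nonneg (gaussExp_pos w).le,
        Real.norm_of_nonneg (by positivity : (0 : ℝ) ≤ 1 + w ^ 2), div_le_iff₀ (by positivity)]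
      nlinarith [sq_abs w, sq_nonneg (|w| - 1), gaussExp_pos w, abs_nonneg w]
    simpa using tendsto_gaussIic_atBot.add hfrac
  have := hmono.le_of_tendsto hlim w
  simp only [D] at this
  rw [neg_mul, neg_div]; linarith

lemma mul_exp_mul_gaussIic_add_nonneg (w : ℝ) :
    0 ≤ (1 + w ^ 2) * exp (w ^ 2 / 2) * gaussIic w + w := by
  have hmills := neg_mul_gaussExp_div_le_gaussIic w
  rw [div_le_iff₀ (by positivity)] at hmills
  have hK := mul_le_mul_of_nonneg_left hmills (exp_pos (w ^ 2 / 2)).le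
  linear_combination hK + w * exp_mul_gaussExp w

section TestFunction

variable {h : ℝ → ℝ} {M : ℝ}

lemma abs_sub_le_mul_abs_sub (hd : Differentiable ℝ h) (hM : ∀ x, |deriv h x| ≤ M) (a b : ℝ) :
    |h a - h b| ≤ M * |a - b| := by
  simpa [Real.norm_eq_abs] using convex_univ.norm_image_sub_le_of_norm_deriv_le
    (fun x _ => hd x) (fun x _ => hM x) (mem_univ b) (mem_univ a)

lemma integrable_sub_mul_gaussExp (hd : Differentiable ℝ h) (hM : ∀ x, |deriv h x| ≤ M)
    (c : ℝ) : Integrable fun z => (h z - c) * gaussExp z := by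
  refine ((integrable_mul_gaussExp.abs.const_mul M).add
    (integrable_gaussExp.const_mul |h 0 - c|)).mono'
    ((hd.continuous.sub continuous_const).mul continuous_gaussExp).aestronglyMeasurable
    (ae_of_all _ fun z => ?_)
  have hlip : |h z - c| ≤ M * |z| + |h 0 - c| := by
    have := abs_sub_le_mul_abs_sub hd hM z 0
    rw [sub_zero] at this
    linarith [abs_sub_le (h z) (h 0) c]
  simp only [Pi.add_apply, Real.norm_eq_abs, abs_mul, abs_of_pos (gaussExp_pos z)]
  nlinarith [gaussExp_pos z]

def steinLeft (h : ℝ → ℝ) (w : ℝ) : ℝ := ∫ s in Iic w, deriv h s * gaussIic s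

def steinRight (h : ℝ → ℝ) (w : ℝ) : ℝ := ∫ s in Ioi w, deriv h s * gaussIic (-s)

lemma integrableOn_deriv_mul_gaussIic (hM : ∀ x, |deriv h x| ≤ M) (a : ℝ) :
    IntegrableOn (fun s => deriv h s * gaussIic s) (Iic a) := by
  refine ((integrableOn_gaussIic_Iic a).const_mul M).mono'
    ((measurable_deriv h).mul continuous_gaussIic.measurable).aestronglyMeasurable
    (ae_of_all _ fun s => ?_)
  rw [Real.norm_eq_abs, abs_mul, abs_of_nonneg (gaussIic_nonneg s)]
  exact mul_le_mul_of_nonneg_right (hM s) (gaussIic_nonneg s)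

lemma hasDerivAt_steinLeft (hdc : Continuous (deriv h)) (hM : ∀ x, |deriv h x| ≤ M) (w : ℝ) :
    HasDerivAt (steinLeft h) (deriv h w * gaussIic w) w :=
  hasDerivAt_integral_Iic (hdc.mul continuous_gaussIic) (integrableOn_deriv_mul_gaussIic hM) w

lemma abs_steinLeft_le (hM : ∀ x, |deriv h x| ≤ M) (w : ℝ) :
    |steinLeft h w| ≤ M * (w * gaussIic w + gaussExp w) := by
  rw [← integral_gaussIic_Iic, ← integral_const_mul, ← Real.norm_eq_abs]
  refine norm_integral_le_of_norm_le ((integrableOn_gaussIic_Iic w).const_mul M)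
    ((ae_restrict_iff' measurableSet_Iic).2 (ae_of_all _ fun s _ => ?_))
  rw [Real.norm_eq_abs, abs_mul, abs_of_nonneg (gaussIic_nonneg s)]
  exact mul_le_mul_of_nonneg_right (hM s) (gaussIic_nonneg s)

lemma tendsto_steinLeft_atBot (hM : ∀ x, |deriv h x| ≤ M) :
    Tendsto (steinLeft h) atBot (𝓝 0) := by
  have hbound := (tendsto_mul_gaussIic_atBot.add tendsto_gaussExp_atBot).const_mul M
  rw [add_zero, mul_zero] at hbound
  exact squeeze_zero_norm (fun w => (Real.norm_eq_abs _).trans_le (abs_steinLeft_le hM w)) hbound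

lemma tendsto_sub_mul_gaussIic_atBot (hd : Differentiable ℝ h) (hM : ∀ x, |deriv h x| ≤ M)
    (a : ℝ) : Tendsto (fun s => (h s - h a) * gaussIic s) atBot (𝓝 0) := by
  have hbound := (tendsto_gaussIic_atBot.const_mul |a|).sub tendsto_mul_gaussIic_atBot
    |>.const_mul M
  rw [mul_zero, sub_zero, mul_zero] at hbound
  refine squeeze_zero_norm' ?_ hbound
  filter_upwards [Iic_mem_atBot 0] with s (hs : s ≤ 0)
  have hlip := abs_sub_le_mul_abs_sub hd hM s a
  have hsa : |s - a| ≤ |a| - s := by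
    rw [abs_le]; constructor <;> linarith [le_abs_self a, neg_abs_le a]
  have hM0 : 0 ≤ M := (abs_nonneg _).trans (hM 0)
  rw [Real.norm_eq_abs, abs_mul, abs_of_nonneg (gaussIic_nonneg s)]
  nlinarith [gaussIic_nonneg s, mul_le_mul_of_nonneg_left hsa hM0]

/-- Integration by parts against `P' = φ`: the boundary term `(h(s) - h(a)) P(s)` vanishes at
`s = a` and as `s → -∞`. -/
lemma steinLeft_eq_neg_integral (hd : Differentiable ℝ h) (hM : ∀ x, |deriv h x| ≤ M)
    (a : ℝ) : steinLeft h a = -∫ s in Iic a, (h s - h a) * gaussExp s := by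
  have hint := (integrable_sub_mul_gaussExp hd hM (h a)).integrableOn (s := Iic a)
  have hparts := integral_Iic_of_hasDerivAt_of_tendsto'
    (fun s _ => ((hd s).hasDerivAt.sub_const (h a)).mul (hasDerivAt_gaussIic s))
    ((integrableOn_deriv_mul_gaussIic hM a).add hint) (tendsto_sub_mul_gaussIic_atBot hd hM a)
  rw [integral_add (integrableOn_deriv_mul_gaussIic hM a) hint, Pi.mul_apply, sub_self,
    zero_mul, sub_zero] at hparts
  rw [steinLeft]
  linarith

lemma steinRight_eq_neg_steinLeft_comp_neg (w : ℝ) :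
    steinRight h w = -steinLeft (fun x => h (-x)) (-w) := by
  rw [steinLeft, ← integral_neg, steinRight, ← integral_comp_neg_Ioi]
  simp [deriv_comp_neg]

lemma abs_deriv_comp_neg_le (hM : ∀ x, |deriv h x| ≤ M) (x : ℝ) :
    |deriv (fun y => h (-y)) x| ≤ M := by
  rw [deriv_comp_neg, abs_neg]; exact hM (-x)

lemma hasDerivAt_steinRight (hdc : Continuous (deriv h)) (hM : ∀ x, |deriv h x| ≤ M) (w : ℝ) :
    HasDerivAt (steinRight h) (-(deriv h w * gaussIic (-w))) w := by
  have hdc' : Continuous (deriv fun y => h (-y)) := by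
    rw [funext fun x => deriv_comp_neg h x]; fun_prop
  have := ((hasDerivAt_steinLeft hdc' (abs_deriv_comp_neg_le hM) (-w)).comp w
    (hasDerivAt_neg w)).neg
  rw [funext steinRight_eq_neg_steinLeft_comp_neg]
  refine this.congr_deriv ?_
  rw [deriv_comp_neg, neg_neg]; ring

lemma abs_steinRight_le (hM : ∀ x, |deriv h x| ≤ M) (w : ℝ) :
    |steinRight h w| ≤ M * (gaussExp w - w * gaussIic (-w)) := by
  rw [steinRight_eq_neg_steinLeft_comp_neg, abs_neg, ← gaussExp_neg, sub_eq_add_neg,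
    add_comm, ← neg_mul]
  exact abs_steinLeft_le (abs_deriv_comp_neg_le hM) (-w)

lemma steinRight_eq_integral (hd : Differentiable ℝ h) (hM : ∀ x, |deriv h x| ≤ M) (a : ℝ) :
    steinRight h a = ∫ s in Ioi a, (h s - h a) * gaussExp s := by
  rw [steinRight_eq_neg_steinLeft_comp_neg, steinLeft_eq_neg_integral
    (h := fun x => h (-x)) (hd.comp differentiable_neg) (abs_deriv_comp_neg_le hM), neg_neg,
    ← integral_comp_neg_Ioi]
  simp only [neg_neg, gaussExp_neg]

lemma tendsto_gaussIic_mul_steinRight_atBot (hM : ∀ x, |deriv h x| ≤ M) :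
    Tendsto (fun w => gaussIic w * steinRight h w) atBot (𝓝 0) := by
  have hbound := ((tendsto_gaussIic_atBot.mul tendsto_gaussExp_atBot).sub
    (tendsto_mul_gaussIic_atBot.mul tendsto_gaussIic_neg_atBot)).const_mul M
  rw [mul_zero, zero_mul, sub_zero, mul_zero] at hbound
  refine squeeze_zero_norm (fun w => ?_) hbound
  rw [norm_mul, Real.norm_of_nonneg (gaussIic_nonneg w), Real.norm_eq_abs]
  calc gaussIic w * |steinRight h w|
      ≤ gaussIic w * (M * (gaussExp w - w * gaussIic (-w))) :=
        mul_le_mul_of_nonneg_left (abs_steinRight_le hM w) (gaussIic_nonneg w)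
    _ = M * (gaussIic w * gaussExp w - w * gaussIic w * gaussIic (-w)) := by ring

lemma sqrt_two_pi_mul_sub_integral_gaussianReal (hd : Differentiable ℝ h)
    (hM : ∀ x, |deriv h x| ≤ M) (a : ℝ) :
    √(2 * π) * (h a - ∫ z, h z ∂gaussianReal 0 1) = steinLeft h a - steinRight h a := by
  have hint := integrable_sub_mul_gaussExp hd hM (h a)
  have hhφ : Integrable fun z => h z * gaussExp z := by
    simpa using integrable_sub_mul_gaussExp hd hM 0
  have htotal : ∫ s, (h s - h a) * gaussExp s =
      √(2 * π) * (∫ z, h z ∂gaussianReal 0 1) - h a * √(2 * π) := by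
    simp_rw [sub_mul]
    rw [integral_sub hhφ (integrable_gaussExp.const_mul (h a)), integral_mul_gaussExp,
      integral_const_mul, integral_gaussExp]
  have hsplit := intervalIntegral.integral_Iic_add_Ioi (b := a) hint.integrableOn
    hint.integrableOn
  rw [htotal] at hsplit
  rw [steinLeft_eq_neg_integral hd hM, steinRight_eq_integral hd hM]
  linear_combination hsplit

/-- `U(u) = √(2π) ∫_{-∞}^u (h - E h(Z)) φ + P(-u) A(u) + P(u) B(u)` has derivative
`φ(u) (√(2π) (h(u) - E h(Z)) - A(u) + B(u)) = 0` and vanishes at `-∞`. -/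
lemma sqrt_two_pi_mul_integral_Iic_eq (hd : Differentiable ℝ h) (hdc : Continuous (deriv h))
    (hM : ∀ x, |deriv h x| ≤ M) (w : ℝ) :
    √(2 * π) * ∫ t in Iic w, (h t - ∫ z, h z ∂gaussianReal 0 1) * gaussExp t =
      -(gaussIic (-w) * steinLeft h w + gaussIic w * steinRight h w) := by
  set c := ∫ z, h z ∂gaussianReal 0 1
  have hint := integrable_sub_mul_gaussExp hd hM c
  set U : ℝ → ℝ := fun u => √(2 * π) * (∫ t in Iic u, (h t - c) * gaussExp t) +
    gaussIic (-u) * steinLeft h u + gaussIic u * steinRight h u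
  have hU (u : ℝ) : HasDerivAt U 0 u := by
    have hF := hasDerivAt_integral_Iic (g := fun t => (h t - c) * gaussExp t)
      ((hd.continuous.sub continuous_const).mul continuous_gaussExp) (fun _ => hint.integrableOn) u
    have hPneg : HasDerivAt (fun u => gaussIic (-u)) (-gaussExp u) u := by
      have := (hasDerivAt_gaussIic (-u)).comp u (hasDerivAt_neg u)
      rwa [gaussExp_neg, mul_neg_one] at this
    refine (((hF.const_mul _).add (hPneg.mul (hasDerivAt_steinLeft hdc hM u))).add
      ((hasDerivAt_gaussIic u).mul (hasDerivAt_steinRight hdc hM u))).congr_deriv ?_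
    linear_combination gaussExp u * sqrt_two_pi_mul_sub_integral_gaussianReal hd hM u
  have hlim : Tendsto U atBot (𝓝 0) := by
    have hF : Tendsto (fun u => ∫ t in Iic u, (h t - c) * gaussExp t) atBot (𝓝 0) :=
      tendsto_integral_Iic_zero tendsto_id
    simpa only [mul_zero, add_zero] using ((hF.const_mul √(2 * π)).add
      (tendsto_gaussIic_neg_atBot.mul (tendsto_steinLeft_atBot hM))).add
      (tendsto_gaussIic_mul_steinRight_atBot hM)
  have hconst (u : ℝ) : U w = U u := is_const_of_deriv_eq_zero
    (fun v => (hU v).differentiableAt) (fun v => (hU v).deriv) w u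
  have hUw : U w = 0 := tendsto_nhds_unique (tendsto_const_nhds.congr hconst) hlim
  simp only [U] at hUw
  linarith

def steinSolution (h : ℝ → ℝ) (w : ℝ) : ℝ :=
  exp (w ^ 2 / 2) * ∫ t in Iic w, (h t - ∫ z, h z ∂gaussianReal 0 1) * gaussExp t

lemma hasDerivAt_steinSolution (hd : Differentiable ℝ h) (hM : ∀ x, |deriv h x| ≤ M) (w : ℝ) :
    HasDerivAt (steinSolution h)
      (w * steinSolution h w + (h w - ∫ z, h z ∂gaussianReal 0 1)) w := by
  set c := ∫ z, h z ∂gaussianReal 0 1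
  have hexp : HasDerivAt (fun u => exp (u ^ 2 / 2)) (exp (w ^ 2 / 2) * w) w := by
    simpa using ((hasDerivAt_pow 2 w).div_const 2).exp
  have hF := hasDerivAt_integral_Iic (g := fun t => (h t - c) * gaussExp t)
    ((hd.continuous.sub continuous_const).mul continuous_gaussExp)
    (fun _ => (integrable_sub_mul_gaussExp hd hM c).integrableOn) w
  refine (hexp.mul hF).congr_deriv ?_
  rw [steinSolution]
  linear_combination (h w - c) * exp_mul_gaussExp w

lemma hasDerivAt_deriv_steinSolution (hd : Differentiable ℝ h) (hM : ∀ x, |deriv h x| ≤ M)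
    (w : ℝ) : HasDerivAt (deriv (steinSolution h)) ((1 + w ^ 2) * steinSolution h w +
      w * (h w - ∫ z, h z ∂gaussianReal 0 1) + deriv h w) w := by
  rw [funext fun w => (hasDerivAt_steinSolution hd hM w).deriv]
  refine (((hasDerivAt_id w).mul (hasDerivAt_steinSolution hd hM w)).add
    ((hd w).hasDerivAt.sub_const _)).congr_deriv ?_
  simp only [id_eq]; ring

lemma abs_one_add_sq_mul_steinSolution_add_le (hd : Differentiable ℝ h)
    (hdc : Continuous (deriv h)) (hM : ∀ x, |deriv h x| ≤ M) (w : ℝ) :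
    |(1 + w ^ 2) * steinSolution h w + w * (h w - ∫ z, h z ∂gaussianReal 0 1)| ≤ M := by
  have hc₁ : 0 ≤ (1 + w ^ 2) * exp (w ^ 2 / 2) * gaussIic (-w) - w := by
    have := mul_exp_mul_gaussIic_add_nonneg (-w)
    rwa [neg_sq, ← sub_eq_add_neg] at this
  have hc₂ := mul_exp_mul_gaussIic_add_nonneg w
  set c₁ := (1 + w ^ 2) * exp (w ^ 2 / 2) * gaussIic (-w) - w
  set c₂ := (1 + w ^ 2) * exp (w ^ 2 / 2) * gaussIic w + w
  have hrep : √(2 * π) * ((1 + w ^ 2) * steinSolution h w +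
      w * (h w - ∫ z, h z ∂gaussianReal 0 1)) = -(steinLeft h w * c₁ + steinRight h w * c₂) := by
    rw [steinSolution]
    linear_combination (1 + w ^ 2) * exp (w ^ 2 / 2) * sqrt_two_pi_mul_integral_Iic_eq hd hdc hM w +
      w * sqrt_two_pi_mul_sub_integral_gaussianReal hd hM w
  have hweights : (w * gaussIic w + gaussExp w) * c₁ + (gaussExp w - w * gaussIic (-w)) * c₂ =
      √(2 * π) := by
    linear_combination (1 + w ^ 2) * (gaussIic w + gaussIic (-w)) * exp_mul_gaussExp w +
      gaussIic_add_gaussIic_neg w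
  have hsqrt : 0 < √(2 * π) := by positivity
  refine le_of_mul_le_mul_left ?_ hsqrt
  calc √(2 * π) * |(1 + w ^ 2) * steinSolution h w + w * (h w - ∫ z, h z ∂gaussianReal 0 1)|
      = |steinLeft h w * c₁ + steinRight h w * c₂| := by
        rw [← abs_of_pos hsqrt, ← abs_mul, hrep, abs_neg]
    _ ≤ |steinLeft h w| * c₁ + |steinRight h w| * c₂ := (abs_add_le _ _).trans_eq <| by
        rw [abs_mul, abs_mul, abs_of_nonneg hc₁, abs_of_nonneg hc₂]
    _ ≤ M * (w * gaussIic w + gaussExp w) * c₁ + M * (gaussExp w - w * gaussIic (-w)) * c₂ :=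
        add_le_add (mul_le_mul_of_nonneg_right (abs_steinLeft_le hM w) hc₁)
          (mul_le_mul_of_nonneg_right (abs_steinRight_le hM w) hc₂)
    _ = √(2 * π) * M := by rw [← hweights]; ring

end TestFunction

end Stein

end

open Stein

/-- For a `C¹` test function `h` with `‖h'‖_∞ ≤ 1`, the bounded solution `f_h` of the
Stein equation `f'(w) - w f(w) = h(w) - E h(Z)` is twice differentiable and satisfies
`‖f_h''‖_∞ ≤ 2 ‖h'‖_∞`. -/
theorem stein_solution_second_derivative_bound
    (h : ℝ → ℝ) (hh : ContDiff ℝ 1 h) (hh' : ∀ w, |deriv h w| ≤ 1)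
    (f : ℝ → ℝ)
    (hf : ∀ w, f w = Real.exp (w ^ 2 / 2) *
      ∫ t in Set.Iic w, (h t - ∫ z, h z ∂(gaussianReal 0 1)) * Real.exp (-t ^ 2 / 2)) :
    (∀ w, DifferentiableAt ℝ f w) ∧ (∀ w, DifferentiableAt ℝ (deriv f) w) ∧
    (∀ w, |deriv (deriv f) w| ≤ 2 * ⨆ v, |deriv h v|) := by
  obtain rfl : f = steinSolution h := funext hf
  have hd : Differentiable ℝ h := hh.differentiable one_ne_zero
  have hbdd : BddAbove (range fun v => |deriv h v|) := ⟨1, by rintro _ ⟨u, rfl⟩; exact hh' u⟩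
  have hM (v : ℝ) : |deriv h v| ≤ ⨆ v, |deriv h v| := le_ciSup hbdd v
  refine ⟨fun w => (hasDerivAt_steinSolution hd hM w).differentiableAt,
    fun w => (hasDerivAt_deriv_steinSolution hd hM w).differentiableAt, fun w => ?_⟩
  rw [(hasDerivAt_deriv_steinSolution hd hM w).deriv, two_mul]
  exact (abs_add_le _ _).trans (add_le_add
    (abs_one_add_sq_mul_steinSolution_add_le hd (hh.continuous_deriv le_rfl) hM w) (hM w))
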